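/- arXiv:1408.5627 — 14 statements merged into one kernel-verified Lean document; each statement's English description precedes it below -/
import Mathlib

section
/- Let (X, p) be a partial metric space, x₀ ∈ X, and f : X → X a map that is Cauchy at x₀ with special limit a ∈ X. If f is non-expansive and f is orbitally continuous at x₀ for a, then f a = a. -/
open Filter Topology

/-- A partial metric (in the sense of O'Neill) on `X`. -/
def IsPartialMetric {X : Type*} (p : X → X → ℝ) : Prop :=
  (∀ x y : X, x = y ↔ (p x x = p x y ∧ p x y = p y y)) ∧
  (∀ x y : X, p x x ≤ p x y) ∧
  (∀ x y : X, p x y = p y x) ∧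
  (∀ x y z : X, p x y ≤ p x z + p z y - p z z)

/-- A strong partial metric on `X`. -/
def IsStrongPartialMetric {X : Type*} (p : X → X → ℝ) : Prop :=
  (∀ x y : X, x ≠ y → p x x < p x y) ∧
  (∀ x y : X, p x y = p y x) ∧
  (∀ x y z : X, p x y ≤ p x z + p z y - p z z)

/-- A sequence is Cauchy in `(X, p)` if `lim_{m,n→∞} p (x m) (x n)` exists. -/
def IsCauchySeqP {X : Type*} (p : X → X → ℝ) (x : ℕ → X) : Prop :=
  ∃ r : ℝ, Tendsto (fun mn : ℕ × ℕ => p (x mn.1) (x mn.2)) atTop (𝓝 r)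

/-- `a` is a special limit of the sequence `x` in `(X, p)`. -/
def IsSpecialLimit {X : Type*} (p : X → X → ℝ) (x : ℕ → X) (a : X) : Prop :=
  Tendsto (fun mn : ℕ × ℕ => p (x mn.1) (x mn.2)) atTop (𝓝 (p a a)) ∧
  Tendsto (fun n : ℕ => p a (x n)) atTop (𝓝 (p a a))

/-- `f` is Cauchy at `x₀` with special limit `a`. -/
def CauchyAtWith {X : Type*} (p : X → X → ℝ) (f : X → X) (x₀ a : X) : Prop :=
  IsCauchySeqP p (fun n : ℕ => f^[n] x₀) ∧ IsSpecialLimit p (fun n : ℕ => f^[n] x₀) a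

/-- `f` is orbitally continuous at `x₀` for `z`. -/
def OrbContAtFor {X : Type*} (p : X → X → ℝ) (f : X → X) (x₀ z : X) : Prop :=
  Tendsto (fun n : ℕ => p (f^[n] x₀) z) atTop (𝓝 (p z z)) →
  Tendsto (fun n : ℕ => p (f^[n] x₀) (f z)) atTop (𝓝 (p (f z) (f z)))

/-- `f` is non-expansive with respect to `p`. -/
def NonExpansive {X : Type*} (p : X → X → ℝ) (f : X → X) : Prop :=
  ∀ x y : X, p (f x) (f y) ≤ p x y

/-- `f` is orbitally `r`-contractive at `x₀`. -/
def OrbRContractiveAt {X : Type*} (p : X → X → ℝ) (f : X → X) (x₀ : X) (r : ℝ) : Prop :=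
  ∃ c : ℝ, 0 ≤ c ∧ c < 1 ∧ ∀ n : ℕ,
    r ≤ p (f^[n] x₀) (f^[n] x₀) ∧
    p (f^[n+2] x₀) (f^[n+1] x₀) ≤ r + c ^ (n+1) * |p (f x₀) x₀|

/-- `(X, p)` is orbitally complete for `f`. -/
def OrbitallyComplete {X : Type*} (p : X → X → ℝ) (f : X → X) : Prop :=
  ∀ x : X, IsCauchySeqP p (fun n : ℕ => f^[n] x) →
    ∃ a : X, IsSpecialLimit p (fun n : ℕ => f^[n] x) a

/-- `φ : [r, ∞) → [0, ∞)` is a continuous non-decreasing function with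
`φ r = 0` and `φ t > 0` for `t > r`. -/
def PhiAdmissible (r : ℝ) (φ : ℝ → ℝ) : Prop :=
  ContinuousOn φ (Set.Ici r) ∧ MonotoneOn φ (Set.Ici r) ∧
  (∀ t ∈ Set.Ici r, 0 ≤ φ t) ∧ φ r = 0 ∧ (∀ t : ℝ, r < t → 0 < φ t)

/-- `f` is orbitally `φ_r`-contractive at `x₀`, witnessed by `φ`. -/
def PhiRContractiveAtWith {X : Type*} (p : X → X → ℝ) (f : X → X) (x₀ : X) (r : ℝ)
    (φ : ℝ → ℝ) : Prop :=
  ∀ m n : ℕ,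
    r ≤ p (f^[n] x₀) (f^[n] x₀) ∧
    p (f^[m+1] x₀) (f^[n+1] x₀) ≤ p (f^[m] x₀) (f^[n] x₀) - φ (p (f^[m] x₀) (f^[n] x₀))

/-- `f` is orbitally `φ_r`-contractive at `x₀`. -/
def PhiRContractiveAt {X : Type*} (p : X → X → ℝ) (f : X → X) (x₀ : X) (r : ℝ) : Prop :=
  ∃ φ : ℝ → ℝ, PhiAdmissible r φ ∧ PhiRContractiveAtWith p f x₀ r φ

theorem stmt_0 {X : Type*} [Nonempty X] (p : X → X → ℝ) (hp : IsPartialMetric p)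
    (x₀ : X) (f : X → X) (a : X) (hca : CauchyAtWith p f x₀ a)
    (hne : NonExpansive p f) (hoc : OrbContAtFor p f x₀ a) :
    f a = a := by
  obtain ⟨sep, ssd, sym, ptri⟩ := hp
  obtain ⟨_, hdbl, hsl⟩ := hca
  set x : ℕ → X := fun n => f^[n] x₀ with hx
  -- diagonal limit : p (x n) (x n) → p a a
  have hdiag : Tendsto (fun n : ℕ => p (x n) (x n)) atTop (𝓝 (p a a)) := by
    have h1 : Tendsto (fun n : ℕ => ((n, n) : ℕ × ℕ)) atTop atTop := by
      rw [← prod_atTop_atTop_eq]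
      exact tendsto_id.prodMk tendsto_id
    exact hdbl.comp h1
  -- p (x n) a → p a a
  have hxa : Tendsto (fun n : ℕ => p (x n) a) atTop (𝓝 (p a a)) := by
    simpa only [sym] using hsl
  have hfa : Tendsto (fun n : ℕ => p (x n) (f a)) atTop (𝓝 (p (f a) (f a))) := hoc hxa
  -- p (f a) (f a) ≤ p a a via non-expansiveness
  have hle1 : p (f a) (f a) ≤ p a a := by
    have h1 : Tendsto (fun n : ℕ => p (x (n + 1)) (f a)) atTop (𝓝 (p (f a) (f a))) :=
      hfa.comp (tendsto_add_atTop_nat 1)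
    refine le_of_tendsto_of_tendsto' h1 hsl fun n => ?_
    have : x (n + 1) = f (x n) := Function.iterate_succ_apply' f n x₀
    rw [this, sym]
    exact hne a (x n)
  -- p a (f a) ≤ p (f a) (f a) via triangle through x n
  have hle2 : p a (f a) ≤ p (f a) (f a) := by
    have h1 : Tendsto (fun n : ℕ => p a (x n) + p (x n) (f a) - p (x n) (x n)) atTop
        (𝓝 (p a a + p (f a) (f a) - p a a)) := (hsl.add hfa).sub hdiag
    have h2 : p a a + p (f a) (f a) - p a a = p (f a) (f a) := by ring
    rw [h2] at h1
    exact ge_of_tendsto' h1 fun n => ptri a (f a) (x n)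
  have h3 : p a a ≤ p a (f a) := ssd a (f a)
  have e1 : p a a = p a (f a) := le_antisymm h3 (hle2.trans hle1)
  have e2 : p a (f a) = p (f a) (f a) :=
    le_antisymm hle2 (by rw [sym a (f a)]; exact ssd (f a) a)
  exact ((sep a (f a)).mpr ⟨e1, e2⟩).symm
end

section
/- Let (X, p) be a partial metric space, x₀ ∈ X, and f : X → X a map that is Cauchy at x₀ with special limit a ∈ X. If f is orbitally continuous at x₀ for a and p(x,y) ≥ p(fa, fa) for all x, y ∈ X, then f a = a. -/
open Filter Topology

theorem stmt_1 {X : Type*} [Nonempty X] (p : X → X → ℝ) (hp : IsPartialMetric p)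
    (x₀ : X) (f : X → X) (a : X) (hca : CauchyAtWith p f x₀ a)
    (hoc : OrbContAtFor p f x₀ a) (hlb : ∀ x y : X, p (f a) (f a) ≤ p x y) :
    f a = a := by
  obtain ⟨hsep, hssd, hsym, htri⟩ := hp
  obtain ⟨_, hdbl, hlim⟩ := hca
  set x : ℕ → X := fun n => f^[n] x₀ with hx
  -- diagonal limit
  have hdiag : Tendsto (fun n : ℕ => p (x n) (x n)) atTop (𝓝 (p a a)) := by
    have h1 : Tendsto (fun n : ℕ => ((n, n) : ℕ × ℕ)) atTop atTop := by
      rw [← Filter.prod_atTop_atTop_eq]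
      exact tendsto_id.prodMk tendsto_id
    exact hdbl.comp h1
  -- orbital continuity
  have hfa : Tendsto (fun n : ℕ => p (x n) (f a)) atTop (𝓝 (p (f a) (f a))) := by
    apply hoc
    have : (fun n : ℕ => p (x n) a) = fun n : ℕ => p a (x n) := by
      funext n; exact hsym _ _
    rw [this]; exact hlim
  -- p a (f a) ≤ p (f a) (f a)
  have key : p a (f a) ≤ p (f a) (f a) := by
    have hten : Tendsto (fun n : ℕ => p a (x n) + p (x n) (f a) - p (x n) (x n))
        atTop (𝓝 (p a a + p (f a) (f a) - p a a)) := (hlim.add hfa).sub hdiag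
    have := ge_of_tendsto hten (Filter.Eventually.of_forall fun n => htri a (f a) (x n))
    linarith
  have h1 : p (f a) (f a) ≤ p (f a) a := hssd _ _
  have h2 : p (f a) a = p a (f a) := hsym _ _
  have h3 : p (f a) (f a) ≤ p a a := hlb a a
  have h4 : p a a ≤ p a (f a) := hssd _ _
  exact ((hsep (f a) a).2 ⟨by linarith, by linarith⟩)
end

section
/- Let (X, p) be a partial metric space, x₀ ∈ X, and f : X → X a map that is Cauchy at x₀ with special limit a ∈ X. If f is non-expansive and p(x,y) ≥ p(a, a) for all x, y ∈ X, then f a = a. -/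
open Filter Topology

theorem stmt_2 {X : Type*} [Nonempty X] (p : X → X → ℝ) (hp : IsPartialMetric p)
    (x₀ : X) (f : X → X) (a : X) (hca : CauchyAtWith p f x₀ a)
    (hne : NonExpansive p f) (hlb : ∀ x y : X, p a a ≤ p x y) :
    f a = a := by
  obtain ⟨sep, ssd, sym, ptri⟩ := hp
  obtain ⟨_, hdl, hsl⟩ := hca
  set x : ℕ → X := fun n => f^[n] x₀ with hx
  -- diagonal limit: p (x n) (x n) → p a a
  have hdiag : Tendsto (fun n : ℕ => p (x n) (x n)) atTop (𝓝 (p a a)) := by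
    have h1 : Tendsto (fun n : ℕ => ((n, n) : ℕ × ℕ)) atTop atTop := by
      rw [← prod_atTop_atTop_eq]
      exact tendsto_id.prodMk tendsto_id
    exact hdl.comp h1
  have hsl' : Tendsto (fun n : ℕ => p a (x (n + 1))) atTop (𝓝 (p a a)) :=
    hsl.comp (tendsto_add_atTop_nat 1)
  have hdiag' : Tendsto (fun n : ℕ => p (x (n + 1)) (x (n + 1))) atTop (𝓝 (p a a)) :=
    hdiag.comp (tendsto_add_atTop_nat 1)
  have hg : Tendsto (fun n : ℕ => p a (x n) + p a (x (n + 1)) - p (x (n + 1)) (x (n + 1)))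
      atTop (𝓝 (p a a)) := by
    have := (hsl.add hsl').sub hdiag'
    simpa using this
  have key : p (f a) a ≤ p a a := by
    refine ge_of_tendsto' hg fun n => ?_
    have h1 : p (f a) a ≤ p (f a) (x (n + 1)) + p (x (n + 1)) a - p (x (n + 1)) (x (n + 1)) :=
      ptri _ _ _
    have h2 : p (f a) (x (n + 1)) ≤ p a (x n) := by
      have : x (n + 1) = f (x n) := by
        simp [hx, Function.iterate_succ_apply']
      rw [this]
      exact hne a (x n)
    have h3 : p (x (n + 1)) a = p a (x (n + 1)) := sym _ _
    linarith
  have e1 : p (f a) a = p a a := le_antisymm key (hlb _ _)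
  have e2 : p (f a) (f a) = p a a :=
    le_antisymm (le_trans (ssd (f a) a) key) (hlb _ _)
  exact ((sep (f a) a).2 ⟨by rw [e1, e2], by rw [e1]⟩)
end

section
/- Let (X, p) be a strong partial metric space, x₀ ∈ X, and f : X → X a map that is Cauchy at x₀ with special limit a ∈ X. If f is non-expansive, then f a = a. -/
open Filter Topology

theorem stmt_3 {X : Type*} [Nonempty X] (p : X → X → ℝ) (hp : IsStrongPartialMetric p)
    (x₀ : X) (f : X → X) (a : X) (hca : CauchyAtWith p f x₀ a)
    (hne : NonExpansive p f) :
    f a = a := by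
  obtain ⟨hssd, hsym, htri⟩ := hp
  obtain ⟨_, hdiag, hlim⟩ := hca
  set x : ℕ → X := fun n => f^[n] x₀ with hx
  -- diagonal
  have hd : Tendsto (fun n : ℕ => ((n+1 : ℕ), (n+1 : ℕ))) atTop atTop :=
    tendsto_atTop_atTop.2 fun b => ⟨max b.1 b.2, fun n hn =>
      ⟨(le_max_left _ _).trans (hn.trans n.le_succ), (le_max_right _ _).trans (hn.trans n.le_succ)⟩⟩
  have hdd : Tendsto (fun n : ℕ => p (x (n+1)) (x (n+1))) atTop (𝓝 (p a a)) :=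
    hdiag.comp hd
  have hshift : Tendsto (fun n : ℕ => p a (x (n+1))) atTop (𝓝 (p a a)) :=
    hlim.comp (tendsto_add_atTop_nat 1)
  have hseq : Tendsto (fun n : ℕ => p a (x n) + p a (x (n+1)) - p (x (n+1)) (x (n+1)))
      atTop (𝓝 (p a a)) := by
    have := (hlim.add hshift).sub hdd
    simpa using this
  have hbound : ∀ n : ℕ, p (f a) a ≤ p a (x n) + p a (x (n+1)) - p (x (n+1)) (x (n+1)) := by
    intro n
    have h1 : p (f a) a ≤ p (f a) (x (n+1)) + p (x (n+1)) a - p (x (n+1)) (x (n+1)) :=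
      htri _ _ _
    have h2 : p (f a) (x (n+1)) ≤ p a (x n) := by
      have : x (n+1) = f (x n) := by simp [hx, Function.iterate_succ_apply']
      rw [this]
      exact hne a (x n)
    have h3 : p (x (n+1)) a = p a (x (n+1)) := hsym _ _
    linarith
  have hle : p (f a) a ≤ p a a := ge_of_tendsto' hseq hbound
  by_contra h
  have := hssd a (f a) (Ne.symm h)
  have h2 : p (f a) a = p a (f a) := hsym _ _
  linarith
end

section
/- Let (X, p) be a strong partial metric space, x₀ ∈ X, and f : X → X a map that is Cauchy at x₀ with special limit a ∈ X. If f is orbitally continuous at x₀ for a, then f a = a. -/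
open Filter Topology

theorem stmt_4 {X : Type*} [Nonempty X] (p : X → X → ℝ) (hp : IsStrongPartialMetric p)
    (x₀ : X) (f : X → X) (a : X) (hca : CauchyAtWith p f x₀ a)
    (hoc : OrbContAtFor p f x₀ a) :
    f a = a := by
  
  obtain ⟨hsssd, hsym, htri⟩ := hp
  obtain ⟨-, hdbl, hax⟩ := hca
  have hxa : Tendsto (fun n : ℕ => p (f^[n] x₀) a) atTop (𝓝 (p a a)) := by
    simpa [hsym] using hax
  have hfa := hoc hxa
  have hdd : Tendsto (fun n : ℕ => ((n, n) : ℕ × ℕ)) atTop atTop :=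
    tendsto_atTop_atTop.2 fun b => ⟨max b.1 b.2, fun n hn =>
      ⟨le_trans (le_max_left _ _) hn, le_trans (le_max_right _ _) hn⟩⟩
  have hdiag : Tendsto (fun n : ℕ => p (f^[n] x₀) (f^[n] x₀)) atTop (𝓝 (p a a)) :=
    hdbl.comp hdd
  have hlim : Tendsto (fun n : ℕ => p a (f^[n] x₀) + p (f^[n] x₀) (f a)
      - p (f^[n] x₀) (f^[n] x₀)) atTop (𝓝 (p (f a) (f a))) := by
    have := (hax.add hfa).sub hdiag
    simpa using this
  have key : p a (f a) ≤ p (f a) (f a) :=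
    le_of_tendsto_of_tendsto' tendsto_const_nhds hlim fun n => htri a (f a) (f^[n] x₀)
  by_contra h
  exact absurd key (not_le.2 (by simpa [hsym] using hsssd (f a) a h))
end

section
/- For a strong partial metric space (X, p), the topology τ[p] generated by the open balls B_ε(x) = {y ∈ X : p(x,y) − p(x,x) < ε}, for x ∈ X and ε > 0, is a T₁ topology. -/
open Filter Topology

theorem stmt_5 {X : Type*} [Nonempty X] (p : X → X → ℝ) (hp : IsStrongPartialMetric p) :
    @T1Space X (TopologicalSpace.generateFrom
      {s : Set X | ∃ (x : X) (ε : ℝ), 0 < ε ∧ s = {y : X | p x y - p x x < ε}}) := by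
  letI t : TopologicalSpace X := TopologicalSpace.generateFrom
      {s : Set X | ∃ (x : X) (ε : ℝ), 0 < ε ∧ s = {y : X | p x y - p x x < ε}}
  rw [t1Space_iff_exists_open]
  intro x y hxy
  refine ⟨{z : X | p x z - p x x < p x y - p x x}, ?_, ?_, ?_⟩
  · exact TopologicalSpace.isOpen_generateFrom_of_mem ⟨x, p x y - p x x, by linarith [hp.1 x y hxy], rfl⟩
  · simp [sub_self]; linarith [hp.1 x y hxy]
  · simp
end

section
/- For each partial metric space (X, p) and each Cauchy sequence ⟨xₙ⟩ in (X, p) having a special limit a ∈ X, for every y ∈ X one has lim_{n→∞} p(xₙ, y) = p(a, y). -/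
open Filter Topology

theorem stmt_6 {X : Type*} [Nonempty X] (p : X → X → ℝ) (hp : IsPartialMetric p)
    (x : ℕ → X) (hx : IsCauchySeqP p x) (a : X) (ha : IsSpecialLimit p x a) :
    ∀ y : X, Tendsto (fun n : ℕ => p (x n) y) atTop (𝓝 (p a y)) := by
  intro y
  obtain ⟨_, hssd, hsym, htri⟩ := hp
  obtain ⟨hmn, han⟩ := ha
  have hd : Tendsto (fun n : ℕ => ((n, n) : ℕ × ℕ)) atTop atTop :=
    tendsto_atTop_atTop.2 fun b =>
      ⟨max b.1 b.2, fun m hm => Prod.le_def.2 ⟨(le_max_left _ _).trans hm, (le_max_right _ _).trans hm⟩⟩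
  have hdiag : Tendsto (fun n : ℕ => p (x n) (x n)) atTop (𝓝 (p a a)) := hmn.comp hd
  have h1 : Tendsto (fun n : ℕ => p a (x n) - p a a) atTop (𝓝 0) := by
    simpa using han.sub (tendsto_const_nhds (x := p a a))
  have h2 : Tendsto (fun n : ℕ => -(p a (x n) - p (x n) (x n))) atTop (𝓝 (-0)) := by
    have := (han.sub hdiag)
    simpa using this.neg
  have hsq : Tendsto (fun n : ℕ => p (x n) y - p a y) atTop (𝓝 0) := by
    refine tendsto_of_tendsto_of_tendsto_of_le_of_le (by simpa using h2) h1 ?_ ?_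
    · intro n
      have h0 := htri a y (x n)
      have h' := hsym (x n) y
      dsimp only
      linarith
    · intro n
      have h0 := htri (x n) y a
      have h' := hsym (x n) a
      dsimp only
      linarith
  have := hsq.add (tendsto_const_nhds (x := p a y))
  simpa using this
end

section
/- For each partial metric space (X, p), element x₀ ∈ X, and map f : X → X such that f is Cauchy at x₀ with special limit a ∈ X: f is orbitally continuous at x₀ for a if and only if p(fa, fa) = p(a, fa). -/
open Filter Topology

theorem stmt_8 {X : Type*} [Nonempty X] (p : X → X → ℝ) (hp : IsPartialMetric p)
    (x₀ : X) (f : X → X) (a : X) (hca : CauchyAtWith p f x₀ a) :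
    OrbContAtFor p f x₀ a ↔ p (f a) (f a) = p a (f a) := by
  obtain ⟨hsep, hssd, hsym, htri⟩ := hp
  obtain ⟨_, hdl, hsl⟩ := hca
  set x : ℕ → X := fun n => f^[n] x₀ with hx
  -- p (x n) (x n) → p a a
  have hdiag : Tendsto (fun n : ℕ => (n, n)) atTop (atTop : Filter (ℕ × ℕ)) := by
    rw [← Filter.prod_atTop_atTop_eq]
    exact tendsto_id.prodMk tendsto_id
  have hself : Tendsto (fun n : ℕ => p (x n) (x n)) atTop (𝓝 (p a a)) := hdl.comp hdiag
  have hsl' : Tendsto (fun n : ℕ => p (x n) a) atTop (𝓝 (p a a)) := by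
    simpa only [hsym] using hsl
  constructor
  · intro hoc
    have h1 : Tendsto (fun n : ℕ => p (x n) (f a)) atTop (𝓝 (p (f a) (f a))) := hoc hsl'
    -- p a (f a) ≤ p a (x n) + p (x n) (f a) - p (x n) (x n)
    have hle : ∀ n, p a (f a) ≤ p a (x n) + p (x n) (f a) - p (x n) (x n) :=
      fun n => htri a (f a) (x n)
    have hlim : Tendsto (fun n : ℕ => p a (x n) + p (x n) (f a) - p (x n) (x n)) atTop
        (𝓝 (p a a + p (f a) (f a) - p a a)) := (hsl.add h1).sub hself
    have h2 : p a (f a) ≤ p a a + p (f a) (f a) - p a a :=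
      le_of_tendsto_of_tendsto' tendsto_const_nhds hlim hle
    have h3 : p (f a) (f a) ≤ p a (f a) := by
      have := hssd (f a) a
      rwa [hsym (f a) a] at this
    linarith
  · intro heq htend
    have hub : ∀ n, p (x n) (f a) ≤ p (x n) a + p a (f a) - p a a :=
      fun n => htri (x n) (f a) a
    have hlb : ∀ n, p (f a) (f a) ≤ p (x n) (f a) := by
      intro n
      have := hssd (f a) (x n)
      rwa [hsym (f a) (x n)] at this
    have hlim : Tendsto (fun n : ℕ => p (x n) a + p a (f a) - p a a) atTop
        (𝓝 (p a a + p a (f a) - p a a)) := (hsl'.add tendsto_const_nhds).sub tendsto_const_nhds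
    have : p a a + p a (f a) - p a a = p (f a) (f a) := by rw [heq]; ring
    rw [this] at hlim
    exact tendsto_of_tendsto_of_tendsto_of_le_of_le tendsto_const_nhds hlim hlb hub
end

section
/- For each partial metric space (X, p), element x₀ ∈ X, real number r ∈ ℝ, and map f : X → X that is orbitally r-contractive at x₀, the orbit ⟨fⁿx₀⟩_{n∈ℕ} of x₀ under f is a Cauchy sequence in (X, p) with lim_{m,n→∞} p(fᵐx₀, fⁿx₀) = r. -/
open Filter Topology

theorem stmt_11 {X : Type*} [Nonempty X] (p : X → X → ℝ) (hp : IsPartialMetric p)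
    (x₀ : X) (r : ℝ) (f : X → X) (hf : OrbRContractiveAt p f x₀ r) :
    IsCauchySeqP p (fun n : ℕ => f^[n] x₀) ∧
    Tendsto (fun mn : ℕ × ℕ => p (f^[mn.1] x₀) (f^[mn.2] x₀)) atTop (𝓝 r) := by
  obtain ⟨c, hc0, hc1, hcontr⟩ := hf
  obtain ⟨hsep, hssd, hsym, htri⟩ := hp
  set M := |p (f x₀) x₀| with hM
  have hM0 : 0 ≤ M := abs_nonneg _
  have h1c : 0 < 1 - c := by linarith
  -- consecutive-step bound
  have step : ∀ n : ℕ, 1 ≤ n → p (f^[n+1] x₀) (f^[n] x₀) ≤ r + c ^ n * M := by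
    intro n hn
    obtain ⟨k, rfl⟩ := Nat.exists_eq_add_of_le' hn
    exact (hcontr k).2
  -- lower bound
  have lower : ∀ m n : ℕ, r ≤ p (f^[m] x₀) (f^[n] x₀) := by
    intro m n
    exact le_trans (hcontr m).1 (hssd _ _)
  -- key sum bound
  have key : ∀ k n : ℕ, 1 ≤ n →
      p (f^[n+k] x₀) (f^[n] x₀) ≤ r + (∑ j ∈ Finset.range (k+1), c ^ (n+j)) * M := by
    intro k
    induction k with
    | zero =>
      intro n hn
      have h1 : p (f^[n] x₀) (f^[n] x₀) ≤ p (f^[n] x₀) (f^[n+1] x₀) := hssd _ _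
      have h2 : p (f^[n] x₀) (f^[n+1] x₀) = p (f^[n+1] x₀) (f^[n] x₀) := hsym _ _
      have h3 := step n hn
      have hs : (∑ j ∈ Finset.range (0+1), c ^ (n+j)) = c ^ n := by
        simp
      rw [hs]
      calc p (f^[n+0] x₀) (f^[n] x₀) = p (f^[n] x₀) (f^[n] x₀) := by norm_num
        _ ≤ r + c ^ n * M := by linarith
    | succ k ih =>
      intro n hn
      have htr := htri (f^[n+(k+1)] x₀) (f^[n] x₀) (f^[n+1] x₀)
      have hih : p (f^[(n+1)+k] x₀) (f^[n+1] x₀) ≤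
          r + (∑ j ∈ Finset.range (k+1), c ^ (n+1+j)) * M := ih (n+1) (by omega)
      have heq : f^[(n+1)+k] x₀ = f^[n+(k+1)] x₀ := by
        congr 1; omega
      rw [heq] at hih
      have hstep := step n hn
      have hr : r ≤ p (f^[n+1] x₀) (f^[n+1] x₀) := (hcontr (n+1)).1
      have hsum : (∑ j ∈ Finset.range (k+2), c ^ (n+j)) =
          (∑ j ∈ Finset.range (k+1), c ^ (n+1+j)) + c ^ n := by
        rw [Finset.sum_range_succ']
        simp only [Nat.add_zero]
        congr 1
        apply Finset.sum_congr rfl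
        intro j _
        congr 1
        omega
      have : p (f^[n+(k+1)] x₀) (f^[n] x₀) ≤
          p (f^[n+(k+1)] x₀) (f^[n+1] x₀) + p (f^[n+1] x₀) (f^[n] x₀)
            - p (f^[n+1] x₀) (f^[n+1] x₀) := htr
      calc p (f^[n+(k+1)] x₀) (f^[n] x₀)
          ≤ (r + (∑ j ∈ Finset.range (k+1), c ^ (n+1+j)) * M) + (r + c ^ n * M) - r := by
            linarith
        _ = r + ((∑ j ∈ Finset.range (k+1), c ^ (n+1+j)) + c ^ n) * M := by ring
        _ = r + (∑ j ∈ Finset.range (k+2), c ^ (n+j)) * M := by rw [hsum]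
  -- geometric bound
  have geo : ∀ k n : ℕ, (∑ j ∈ Finset.range (k+1), c ^ (n+j)) ≤ c ^ n / (1 - c) := by
    intro k n
    have h1 : (∑ j ∈ Finset.range (k+1), c ^ (n+j))
        = c ^ n * ∑ j ∈ Finset.range (k+1), c ^ j := by
      rw [Finset.mul_sum]
      apply Finset.sum_congr rfl
      intro j _
      rw [pow_add]
    rw [h1]
    have h2 : (∑ j ∈ Finset.range (k+1), c ^ j) ≤ 1 / (1 - c) := by
      rw [geom_sum_eq (by linarith : c ≠ 1) (k+1)]
      have hpow : (0:ℝ) ≤ c ^ (k+1) := pow_nonneg hc0 _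
      have he : (c ^ (k+1) - 1) / (c - 1) = (1 - c ^ (k+1)) / (1 - c) := by
        rw [div_eq_div_iff (by linarith) (by linarith)]; ring
      rw [he, div_le_div_iff₀ h1c h1c]
      nlinarith
    calc c ^ n * ∑ j ∈ Finset.range (k+1), c ^ j ≤ c ^ n * (1 / (1 - c)) := by
          apply mul_le_mul_of_nonneg_left h2 (pow_nonneg hc0 _)
      _ = c ^ n / (1 - c) := by ring
  -- combined upper bound for n ≤ m, 1 ≤ n
  have upper : ∀ m n : ℕ, 1 ≤ n → n ≤ m →
      p (f^[m] x₀) (f^[n] x₀) ≤ r + c ^ n / (1 - c) * M := by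
    intro m n hn hnm
    obtain ⟨k, rfl⟩ := Nat.exists_eq_add_of_le hnm
    calc p (f^[n+k] x₀) (f^[n] x₀) ≤ r + (∑ j ∈ Finset.range (k+1), c ^ (n+j)) * M :=
          key k n hn
      _ ≤ r + c ^ n / (1 - c) * M := by
          have := geo k n
          nlinarith
  -- the main tendsto
  have ht : Tendsto (fun mn : ℕ × ℕ => p (f^[mn.1] x₀) (f^[mn.2] x₀)) atTop (𝓝 r) := by
    rw [Metric.tendsto_nhds]
    intro ε hε
    have hlim : Tendsto (fun n : ℕ => c ^ n / (1 - c) * M) atTop (𝓝 0) := by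
      have := tendsto_pow_atTop_nhds_zero_of_lt_one hc0 hc1
      have h := (this.div_const (1 - c)).mul_const M
      simpa using h
    have hev : ∀ᶠ n : ℕ in atTop, c ^ n / (1 - c) * M < ε := by
      have := hlim.eventually (eventually_lt_nhds hε)
      simpa using this
    obtain ⟨N, hN⟩ := hev.exists_forall_of_atTop
    set N' := max 1 N with hN'
    filter_upwards [eventually_ge_atTop ((N', N') : ℕ × ℕ)] with mn hmn
    obtain ⟨hm, hn⟩ : N' ≤ mn.1 ∧ N' ≤ mn.2 := hmn
    have h1m : 1 ≤ mn.1 := le_trans (le_max_left 1 N) hm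
    have h1n : 1 ≤ mn.2 := le_trans (le_max_left 1 N) hn
    have hbound : p (f^[mn.1] x₀) (f^[mn.2] x₀) ≤ r + c ^ N' / (1 - c) * M := by
      have hmono : ∀ a b : ℕ, N' ≤ a → c ^ a ≤ c ^ N' :=
        fun a b ha => pow_le_pow_of_le_one hc0 hc1.le ha
      rcases le_total mn.2 mn.1 with h | h
      · calc p (f^[mn.1] x₀) (f^[mn.2] x₀) ≤ r + c ^ mn.2 / (1 - c) * M :=
            upper mn.1 mn.2 h1n h
          _ ≤ r + c ^ N' / (1 - c) * M := by
              have h' := hmono mn.2 0 hn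
              have e : ∀ a : ℕ, c ^ a / (1 - c) * M = c ^ a * (M * (1 - c)⁻¹) :=
                fun a => by ring
              rw [e, e]
              have hM' : (0:ℝ) ≤ M * (1 - c)⁻¹ :=
                mul_nonneg hM0 (inv_nonneg.2 h1c.le)
              have := mul_le_mul_of_nonneg_right h' hM'
              linarith
      · rw [hsym]
        calc p (f^[mn.2] x₀) (f^[mn.1] x₀) ≤ r + c ^ mn.1 / (1 - c) * M :=
            upper mn.2 mn.1 h1m h
          _ ≤ r + c ^ N' / (1 - c) * M := by
              have h' := hmono mn.1 0 hm
              have e : ∀ a : ℕ, c ^ a / (1 - c) * M = c ^ a * (M * (1 - c)⁻¹) :=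
                fun a => by ring
              rw [e, e]
              have hM' : (0:ℝ) ≤ M * (1 - c)⁻¹ :=
                mul_nonneg hM0 (inv_nonneg.2 h1c.le)
              have := mul_le_mul_of_nonneg_right h' hM'
              linarith
    have hlow := lower mn.1 mn.2
    have hεN : c ^ N' / (1 - c) * M < ε := hN N' (le_max_right 1 N)
    rw [Real.dist_eq, abs_sub_lt_iff]
    constructor <;> linarith
  exact ⟨⟨r, ht⟩, ht⟩
end

section
/- Let (X, p) be a partial metric space, r ∈ ℝ, x₀ ∈ X, and f : X → X a map such that f is orbitally r-contractive at x₀ and (X, p) is orbitally complete for f. Assume further that either (1) f is non-expansive and orbitally continuous at x₀, or (2) f is non-expansive and p(x,y) ≥ r for all x, y ∈ X. Then there exists a ∈ X such that f a = a and p(a, a) = r. -/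
open Filter Topology

theorem stmt_12 {X : Type*} [Nonempty X] (p : X → X → ℝ) (hp : IsPartialMetric p)
    (r : ℝ) (x₀ : X) (f : X → X) (hf : OrbRContractiveAt p f x₀ r)
    (hcomp : OrbitallyComplete p f)
    (h : (NonExpansive p f ∧ ∀ z : X, OrbContAtFor p f x₀ z) ∨
         (NonExpansive p f ∧ ∀ x y : X, r ≤ p x y)) :
    ∃ a : X, f a = a ∧ p a a = r := by
  obtain ⟨hsep, hssd, hsym, htri⟩ := hp
  obtain ⟨c, hc0, hc1, hcontr⟩ := hf
  set x : ℕ → X := fun n => f^[n] x₀ with hxdef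
  have hfx : ∀ n, f (x n) = x (n + 1) := fun n => (Function.iterate_succ_apply' f n x₀).symm
  set K := |p (f x₀) x₀| with hKdef
  have hK0 : 0 ≤ K := abs_nonneg _
  have h1c : 0 < 1 - c := by linarith
  have hdiag : ∀ n, r ≤ p (x n) (x n) := fun n => (hcontr n).1
  have hlow : ∀ m n, r ≤ p (x m) (x n) := fun m n => (hdiag m).trans (hssd _ _)
  have hstep : ∀ k, p (x (k + 2)) (x (k + 1)) ≤ r + c ^ (k + 1) * K := fun k => (hcontr k).2
  set C : ℝ := 1 + 1 / (1 - c) with hCdef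
  have hC0 : 0 ≤ C := by
    have : 0 < 1 / (1 - c) := div_pos one_pos h1c
    rw [hCdef]; linarith
  have hkey : ∀ n m, p (x (n + 1 + m)) (x (n + 1)) ≤
      r + K * (c ^ (n + 1) * (1 + (1 - c ^ m) / (1 - c))) := by
    intro n m
    induction m with
    | zero =>
      have h1 : p (x (n + 1)) (x (n + 1)) ≤ p (x (n + 1)) (x (n + 2)) := hssd _ _
      have h2 : p (x (n + 1)) (x (n + 2)) = p (x (n + 2)) (x (n + 1)) := hsym _ _
      have h3 := hstep n
      have h4 : (1 : ℝ) - c ^ 0 = 0 := by norm_num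
      simp only [Nat.add_zero, h4, zero_div]
      have hcn : 0 ≤ c ^ (n + 1) := pow_nonneg hc0 _
      nlinarith
    | succ m ih =>
      have htr := htri (x (n + 1 + (m + 1))) (x (n + 1)) (x (n + 1 + m))
      have hs : p (x (n + 1 + (m + 1))) (x (n + 1 + m)) ≤ r + c ^ (n + 1 + m) * K := by
        have h5 := hstep (n + m)
        have e1 : n + m + 2 = n + 1 + (m + 1) := by omega
        have e2 : n + m + 1 = n + 1 + m := by omega
        rw [e1, e2] at h5
        exact h5
      have hd := hdiag (n + 1 + m)
      have heq : c ^ (n + 1 + m) + c ^ (n + 1) * ((1 - c ^ m) / (1 - c)) =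
          c ^ (n + 1) * ((1 - c ^ (m + 1)) / (1 - c)) := by
        rw [pow_add c (n + 1) m]
        field_simp
        ring
      have heqK : K * c ^ (n + 1 + m) + K * (c ^ (n + 1) * ((1 - c ^ m) / (1 - c))) =
          K * (c ^ (n + 1) * ((1 - c ^ (m + 1)) / (1 - c))) := by
        rw [← mul_add, heq]
      nlinarith
  have hkey2 : ∀ n m, p (x (n + 1 + m)) (x (n + 1)) ≤ r + K * (c ^ (n + 1) * C) := by
    intro n m
    refine (hkey n m).trans ?_
    have hcm : (1 - c ^ m) / (1 - c) ≤ 1 / (1 - c) := by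
      apply div_le_div_of_nonneg_right ?_ h1c.le |>.trans_eq rfl
      · have : 0 ≤ c ^ m := pow_nonneg hc0 _
        linarith
    have hcn : 0 ≤ c ^ (n + 1) := pow_nonneg hc0 _
    have : c ^ (n + 1) * (1 + (1 - c ^ m) / (1 - c)) ≤ c ^ (n + 1) * C := by
      rw [hCdef]
      apply mul_le_mul_of_nonneg_left (by linarith) hcn
    nlinarith
  have hub : ∀ m n, 1 ≤ m → 1 ≤ n →
      p (x m) (x n) ≤ r + K * (c ^ min m n * C) := by
    intro m n hm hn
    rcases le_total n m with hle | hle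
    · obtain ⟨k, rfl⟩ := Nat.exists_eq_add_of_le hle
      obtain ⟨n', rfl⟩ := Nat.exists_eq_add_of_le hn
      have hmin : min (1 + n' + k) (1 + n') = n' + 1 := by omega
      rw [hmin]
      simp only [show (1:ℕ) + n' = n' + 1 from by omega]
      exact hkey2 n' k
    · obtain ⟨k, rfl⟩ := Nat.exists_eq_add_of_le hle
      obtain ⟨m', rfl⟩ := Nat.exists_eq_add_of_le hm
      have hmin : min (1 + m') (1 + m' + k) = m' + 1 := by omega
      rw [hmin, hsym]
      simp only [show (1:ℕ) + m' = m' + 1 from by omega]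
      exact hkey2 m' k
  have hlim : Tendsto (fun mn : ℕ × ℕ => p (x mn.1) (x mn.2)) atTop (𝓝 r) := by
    rw [Metric.tendsto_atTop]
    intro ε hε
    have hp0 : Tendsto (fun N : ℕ => K * (c ^ N * C)) atTop (𝓝 0) := by
      have h0 := tendsto_pow_atTop_nhds_zero_of_lt_one hc0 hc1
      have h1 := h0.const_mul (K * C)
      rw [mul_zero] at h1
      refine h1.congr fun N => by ring
    obtain ⟨N, hN⟩ := (Metric.tendsto_atTop.1 hp0) ε hε
    refine ⟨(N + 1, N + 1), fun mn hmn => ?_⟩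
    obtain ⟨h1, h2⟩ := Prod.le_def.mp hmn
    have hm1 : 1 ≤ mn.1 := by omega
    have hn1 : 1 ≤ mn.2 := by omega
    have hub' := hub mn.1 mn.2 hm1 hn1
    have hmin : N ≤ min mn.1 mn.2 := le_min (by omega) (by omega)
    have hcm : c ^ min mn.1 mn.2 ≤ c ^ N := pow_le_pow_of_le_one hc0 hc1.le hmin
    have hNd := hN N le_rfl
    rw [Real.dist_eq, sub_zero, abs_of_nonneg (by positivity)] at hNd
    rw [Real.dist_eq, abs_of_nonneg (by linarith [hlow mn.1 mn.2])]
    have hmul : K * (c ^ min mn.1 mn.2 * C) ≤ K * (c ^ N * C) := by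
      apply mul_le_mul_of_nonneg_left _ hK0
      exact mul_le_mul_of_nonneg_right hcm hC0
    linarith
  obtain ⟨a, hsl1, hsl2⟩ := hcomp x₀ ⟨r, hlim⟩
  have paa : p a a = r := tendsto_nhds_unique hsl1 hlim
  have hax : Tendsto (fun n => p a (x n)) atTop (𝓝 r) := paa ▸ hsl2
  have hne : NonExpansive p f := h.elim And.left And.left
  -- p a (f a) ≤ r
  have hb : ∀ n, p a (f a) ≤ p a (x (n + 1)) + p a (x n) - r := by
    intro n
    have t := htri a (f a) (x (n + 1))
    have h2 : p (x (n + 1)) (f a) ≤ p a (x n) := by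
      have h3 := hne (x n) a
      rw [hfx n, hsym (x n) a] at h3
      exact h3
    have h3 := hdiag (n + 1)
    linarith
  have hTend : Tendsto (fun n => p a (x (n + 1)) + p a (x n) - r) atTop (𝓝 (r + r - r)) :=
    ((hax.comp (tendsto_add_atTop_nat 1)).add hax).sub tendsto_const_nhds
  have hafa_le : p a (f a) ≤ r := by
    have := ge_of_tendsto' hTend hb
    linarith
  have hr_le_afa : r ≤ p a (f a) := paa ▸ hssd a (f a)
  have hafa : p a (f a) = r := le_antisymm hafa_le hr_le_afa
  have hfafa_le : p (f a) (f a) ≤ r := paa ▸ hne a a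
  have hr_le_fafa : r ≤ p (f a) (f a) := by
    rcases h with ⟨_, hcont⟩ | ⟨_, hbd⟩
    · have hpre : Tendsto (fun n => p (x n) a) atTop (𝓝 (p a a)) := by
        rw [paa]
        exact hax.congr fun n => hsym a (x n)
      have hconc := hcont a hpre
      have hterm : ∀ n, r ≤ p (x n) (f a) := fun n => (hdiag n).trans (hssd _ _)
      exact ge_of_tendsto' hconc hterm
    · exact hbd _ _
  have hfafa : p (f a) (f a) = r := le_antisymm hfafa_le hr_le_fafa
  have hfaa : p (f a) a = r := (hsym (f a) a).trans hafa
  refine ⟨a, (hsep (f a) a).2 ⟨?_, ?_⟩, paa⟩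
  · rw [hfafa, hfaa]
  · rw [hfaa, paa]
end

section
/- For each partial metric space (X, p), element x₀ ∈ X, real number r ∈ ℝ, and map f : X → X that is orbitally φ_r-contractive at x₀, the orbit ⟨fⁿx₀⟩_{n∈ℕ} of x₀ under f is a Cauchy sequence in (X, p) with lim_{m,n→∞} p(fᵐx₀, fⁿx₀) = r. -/
open Filter Topology

theorem stmt_15 {X : Type*} [Nonempty X] (p : X → X → ℝ) (hp : IsPartialMetric p)
    (x₀ : X) (r : ℝ) (f : X → X) (hf : PhiRContractiveAt p f x₀ r) :
    IsCauchySeqP p (fun n : ℕ => f^[n] x₀) ∧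
    Tendsto (fun mn : ℕ × ℕ => p (f^[mn.1] x₀) (f^[mn.2] x₀)) atTop (𝓝 r) := by
  obtain ⟨_, hssd, hsym, htri⟩ := hp
  obtain ⟨φ, ⟨hφc, hφm, hφnn, hφr, hφpos⟩, hcon⟩ := hf
  set x : ℕ → X := fun n => f^[n] x₀ with hxdef
  set a : ℕ → ℕ → ℝ := fun m n => p (x m) (x n) with hadef
  have ha_ge : ∀ m n, r ≤ a m n := by
    intro m n
    have h1 : r ≤ p (x n) (x n) := (hcon m n).1
    have h2 : p (x n) (x n) ≤ p (x n) (x m) := hssd (x n) (x m)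
    have h3 : p (x n) (x m) = p (x m) (x n) := hsym (x n) (x m)
    simp only [hadef]; linarith
  have hstep : ∀ m n, a (m+1) (n+1) ≤ a m n - φ (a m n) := fun m n => (hcon m n).2
  have hφa : ∀ m n, 0 ≤ φ (a m n) := fun m n => hφnn _ (ha_ge m n)
  have hasym : ∀ m n, a m n = a n m := fun m n => hsym (x m) (x n)
  -- diagonal convergence
  have diag : ∀ m n : ℕ, Tendsto (fun k => a (m+k) (n+k)) atTop (𝓝 r) := by
    intro m n
    set g : ℕ → ℝ := fun k => a (m+k) (n+k) with hgdef
    have hgdec : ∀ k, g (k+1) ≤ g k := by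
      intro k
      have h1 := hstep (m+k) (n+k)
      have h2 := hφa (m+k) (n+k)
      have : g (k+1) = a (m+k+1) (n+k+1) := rfl
      rw [this]; linarith
    have hganti : Antitone g := antitone_nat_of_succ_le hgdec
    have hgbdd : BddBelow (Set.range g) := ⟨r, by rintro y ⟨k, rfl⟩; exact ha_ge _ _⟩
    have hgL : Tendsto g atTop (𝓝 (⨅ k, g k)) := tendsto_atTop_ciInf hganti hgbdd
    set L : ℝ := ⨅ k, g k with hLdef
    have hrL : r ≤ L := le_ciInf fun k => ha_ge _ _
    have hφg : Tendsto (fun k => φ (g k)) atTop (𝓝 (φ L)) := by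
      have hcw : ContinuousWithinAt φ (Set.Ici r) L := hφc.continuousWithinAt hrL
      exact hcw.tendsto.comp (tendsto_nhdsWithin_of_tendsto_nhds_of_eventually_within _ hgL
        (Eventually.of_forall fun k => ha_ge _ _))
    have h1 : Tendsto (fun k => g (k+1)) atTop (𝓝 L) := hgL.comp (tendsto_add_atTop_nat 1)
    have h2 : Tendsto (fun k => g k - φ (g k)) atTop (𝓝 (L - φ L)) := hgL.sub hφg
    have hLle : L ≤ L - φ L := le_of_tendsto_of_tendsto' h1 h2 fun k => by
      have h3 := hstep (m+k) (n+k)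
      have : g (k+1) = a (m+k+1) (n+k+1) := rfl
      rw [this]; exact h3
    have hLr : L = r := by
      rcases eq_or_lt_of_le hrL with h | h
      · exact h.symm
      · exact absurd (hφpos L h) (by linarith)
    rwa [hLr] at hgL
  have hs : Tendsto (fun n => a n n) atTop (𝓝 r) := by
    have h := diag 0 0; simpa using h
  have ht : Tendsto (fun n => a n (n+1)) atTop (𝓝 r) := by
    have h := diag 0 1; simpa [Nat.add_comm] using h
  -- main convergence
  have main : Tendsto (fun mn : ℕ × ℕ => a mn.1 mn.2) atTop (𝓝 r) := by
    have H : ∀ ε > (0:ℝ), ∃ N : ℕ, ∀ m, N ≤ m → ∀ n, N ≤ n → a m n < r + ε := by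
      by_contra hcontra
      push_neg at hcontra
      obtain ⟨ε, hε, hbad⟩ := hcontra
      have hrε : r < r + ε := by linarith
      obtain ⟨N₀, hN₀⟩ := (eventually_atTop.1
        ((hs.eventually_lt_const hrε).and (ht.eventually_lt_const hrε)))
      have key : ∀ N, N₀ ≤ N → ∃ m n, N ≤ m ∧ m < n ∧ r + ε ≤ a m n := by
        intro N hN
        obtain ⟨m, hm, n, hn, hab⟩ := hbad N
        rcases lt_trichotomy m n with h | h | h
        · exact ⟨m, n, hm, h, hab⟩
        · subst h; exact absurd hab (not_le.2 (hN₀ m (hN.trans hm)).1)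
        · exact ⟨n, m, hn, h, by rwa [hasym]⟩
      have hP : ∀ k : ℕ, ∃ m j, k ≤ m ∧ m + 1 ≤ j ∧ a m j < r + ε ∧ r + ε ≤ a m (j+1) := by
        intro k
        obtain ⟨m, n, hNm, hmn, hab⟩ := key (max k N₀) (le_max_right _ _)
        have hm0 : N₀ ≤ m := le_trans (le_max_right _ _) hNm
        have hkm : k ≤ m := le_trans (le_max_left _ _) hNm
        have aux : ∀ d, r + ε ≤ a m (m+1+d) →
            ∃ j, m + 1 ≤ j ∧ a m j < r + ε ∧ r + ε ≤ a m (j+1) := by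
          intro d
          induction d with
          | zero => intro h; exact absurd h (not_le.2 (hN₀ m hm0).2)
          | succ d ih =>
            intro h
            by_cases hc : r + ε ≤ a m (m+1+d)
            · exact ih hc
            · exact ⟨m+1+d, Nat.le_add_right _ _, not_le.1 hc, h⟩
        have hnd : m + 1 + (n - m - 1) = n := by omega
        obtain ⟨j, hj1, hj2, hj3⟩ := aux (n - m - 1) (by rw [hnd]; exact hab)
        exact ⟨m, j, hkm, hj1, hj2, hj3⟩
      choose mf jf h1 h2 h3 h4 using hP
      set b : ℕ → ℝ := fun k => a (mf k) (jf k + 1) with hbdef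
      have hmtop : Tendsto mf atTop atTop := tendsto_atTop_mono h1 tendsto_id
      have hkj : ∀ k, k ≤ jf k := fun k => le_trans (h1 k) (le_trans (Nat.le_succ _) (h2 k))
      have hjtop : Tendsto jf atTop atTop := tendsto_atTop_mono hkj tendsto_id
      have hm1top : Tendsto (fun k => mf k + 1) atTop atTop :=
        tendsto_atTop_mono (fun k => le_trans (h1 k) (Nat.le_succ _)) tendsto_id
      have hj1top : Tendsto (fun k => jf k + 1) atTop atTop :=
        tendsto_atTop_mono (fun k => le_trans (hkj k) (Nat.le_succ _)) tendsto_id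
      have hj2top : Tendsto (fun k => jf k + 2) atTop atTop :=
        tendsto_atTop_mono (fun k => le_trans (hkj k) (by omega)) tendsto_id
      -- squeeze to show b → r + ε
      have hupper : ∀ k, b k ≤ (r + ε) + a (jf k) (jf k + 1) - a (jf k) (jf k) := by
        intro k
        have h5 := htri (x (mf k)) (x (jf k + 1)) (x (jf k))
        have h6 := h3 k
        simp only [hbdef, hadef] at *
        linarith
      have hu : Tendsto (fun k => (r + ε) + a (jf k) (jf k + 1) - a (jf k) (jf k))
          atTop (𝓝 ((r + ε) + r - r)) :=
        (tendsto_const_nhds.add (ht.comp hjtop)).sub (hs.comp hjtop)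
      rw [show (r + ε) + r - r = r + ε by ring] at hu
      have hb : Tendsto b atTop (𝓝 (r + ε)) :=
        tendsto_of_tendsto_of_tendsto_of_le_of_le tendsto_const_nhds hu
          (fun k => h4 k) hupper
      have hφb : Tendsto (fun k => φ (b k)) atTop (𝓝 (φ (r + ε))) := by
        have hcw : ContinuousWithinAt φ (Set.Ici r) (r + ε) := hφc.continuousWithinAt hrε.le
        exact hcw.tendsto.comp (tendsto_nhdsWithin_of_tendsto_nhds_of_eventually_within _ hb
          (Eventually.of_forall fun k => ha_ge _ _))
      have hkey : ∀ k, φ (b k) ≤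
          a (mf k) (mf k + 1) + a (jf k + 1) (jf k + 2) - a (mf k + 1) (mf k + 1)
            - a (jf k + 2) (jf k + 2) := by
        intro k
        have hA := htri (x (mf k)) (x (jf k + 1)) (x (mf k + 1))
        have hB := htri (x (mf k + 1)) (x (jf k + 1)) (x (jf k + 2))
        have hC := hstep (mf k) (jf k + 1)
        have hD := hsym (x (jf k + 2)) (x (jf k + 1))
        simp only [hbdef, hadef] at *
        linarith
      have hc : Tendsto (fun k =>
          a (mf k) (mf k + 1) + a (jf k + 1) (jf k + 2) - a (mf k + 1) (mf k + 1)
            - a (jf k + 2) (jf k + 2)) atTop (𝓝 (r + r - r - r)) :=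
        (((ht.comp hmtop).add (ht.comp hj1top)).sub (hs.comp hm1top)).sub (hs.comp hj2top)
      rw [show r + r - r - r = (0:ℝ) by ring] at hc
      have hfinal : φ (r + ε) ≤ 0 := le_of_tendsto_of_tendsto' hφb hc hkey
      exact absurd (hφpos (r + ε) hrε) (by linarith)
    rw [Metric.tendsto_nhds]
    intro ε hε
    obtain ⟨N, hN⟩ := H ε hε
    rw [eventually_atTop]
    refine ⟨(N, N), fun mn hmn => ?_⟩
    have h5 := hN mn.1 hmn.1 mn.2 hmn.2
    have h6 := ha_ge mn.1 mn.2
    rw [Real.dist_eq, abs_sub_lt_iff]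
    constructor <;> linarith
  exact ⟨⟨r, main⟩, main⟩
end

section
/- Let (X, p) be a partial metric space, r ∈ ℝ, x₀ ∈ X, φ : [r, ∞) → [0, ∞) a continuous non-decreasing function with φ(r) = 0 and φ(t) > 0 for all t > r, and f : X → X a map such that f is orbitally φ_r-contractive at x₀ (witnessed by φ) and (X, p) is orbitally complete for f. Assume further that either (1) f is non-expansive and orbitally continuous at x₀, or (2) f is non-expansive and p(x,y) ≥ r for all x, y ∈ X. Then there exists a ∈ X such that f a = a and p(a, a) = r. -/
open Filter Topology

private lemma phi_seq_tendsto (r : ℝ) (φ : ℝ → ℝ) (hφ : PhiAdmissible r φ)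
    (s : ℕ → ℝ) (hs : ∀ n, r ≤ s n) (hstep : ∀ n, s (n+1) ≤ s n - φ (s n)) :
    Tendsto s atTop (𝓝 r) := by
  obtain ⟨hc, hm, hnn, hr, hpos⟩ := hφ
  have hanti : Antitone s := antitone_nat_of_succ_le fun n => by
    have h1 := hstep n
    have h0 : 0 ≤ φ (s n) := hnn _ (hs n)
    linarith
  have hbdd : BddBelow (Set.range s) := ⟨r, by rintro _ ⟨n, rfl⟩; exact hs n⟩
  have hL : Tendsto s atTop (𝓝 (⨅ n, s n)) := tendsto_atTop_ciInf hanti hbdd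
  set L := ⨅ n, s n with hLdef
  have hrL : r ≤ L := le_ciInf hs
  have hφL : Tendsto (fun n => φ (s n)) atTop (𝓝 (φ L)) := by
    have hcw : ContinuousWithinAt φ (Set.Ici r) L := hc L hrL
    exact hcw.tendsto.comp
      (tendsto_nhdsWithin_iff.2 ⟨hL, Filter.Eventually.of_forall fun n => hs n⟩)
  have hs1 : Tendsto (fun n => s (n+1)) atTop (𝓝 L) := hL.comp (tendsto_add_atTop_nat 1)
  have h1 : L ≤ L - φ L :=
    le_of_tendsto_of_tendsto' hs1 (hL.sub hφL) fun n => hstep n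
  have hφL0 : φ L = 0 := le_antisymm (by linarith) (hnn L hrL)
  have hLr : L = r := by
    by_contra hne
    have hlt : r < L := lt_of_le_of_ne hrL (Ne.symm hne)
    exact absurd hφL0 (ne_of_gt (hpos L hlt))
  rwa [hLr] at hL

theorem stmt_16 {X : Type*} [Nonempty X] (p : X → X → ℝ) (hp : IsPartialMetric p)
    (r : ℝ) (x₀ : X) (φ : ℝ → ℝ) (hφ : PhiAdmissible r φ)
    (f : X → X) (hf : PhiRContractiveAtWith p f x₀ r φ)
    (hcomp : OrbitallyComplete p f)
    (h : (NonExpansive p f ∧ ∀ z : X, OrbContAtFor p f x₀ z) ∨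
         (NonExpansive p f ∧ ∀ x y : X, r ≤ p x y)) :
    ∃ a : X, f a = a ∧ p a a = r := by
  obtain ⟨sep, ssd, sym, ptri⟩ := hp
  obtain ⟨hc, hmon, hnn, hr0, hpos⟩ := hφ
  -- self-distances tend to r
  have ht : ∀ n, r ≤ p (f^[n] x₀) (f^[n] x₀) := fun n => (hf n n).1
  have tlim : Tendsto (fun n => p (f^[n] x₀) (f^[n] x₀)) atTop (𝓝 r) :=
    phi_seq_tendsto r φ ⟨hc, hmon, hnn, hr0, hpos⟩ _ ht fun n => (hf n n).2
  -- consecutive distances tend to r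
  have hu : ∀ n, r ≤ p (f^[n+1] x₀) (f^[n] x₀) := fun n =>
    le_trans (ht (n+1)) (ssd _ _)
  have ulim : Tendsto (fun n => p (f^[n+1] x₀) (f^[n] x₀)) atTop (𝓝 r) :=
    phi_seq_tendsto r φ ⟨hc, hmon, hnn, hr0, hpos⟩ _ hu fun n => (hf (n+1) n).2
  have hlow : ∀ m n : ℕ, r ≤ p (f^[m] x₀) (f^[n] x₀) := fun m n =>
    le_trans (ht m) (ssd _ _)
  -- key uniform bound
  have key : ∀ ε > (0:ℝ), ∃ N : ℕ, ∀ m ≥ N, ∀ n ≥ N,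
      p (f^[m] x₀) (f^[n] x₀) ≤ r + ε := by
    intro ε hε
    have hδpos : (0:ℝ) < min (ε/4) (φ (r + ε/4)) :=
      lt_min (by linarith) (hpos _ (by linarith))
    set δ := min (ε/4) (φ (r + ε/4)) with hδdef
    have h1 : Tendsto (fun n => p (f^[n+1] x₀) (f^[n] x₀)
        - p (f^[n+1] x₀) (f^[n+1] x₀)) atTop (𝓝 0) := by
      have := ulim.sub (tlim.comp (tendsto_add_atTop_nat 1))
      simpa using this
    have h2 : ∀ᶠ n in atTop, p (f^[n+1] x₀) (f^[n] x₀)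
        - p (f^[n+1] x₀) (f^[n+1] x₀) < δ := h1.eventually_lt_const hδpos
    have h3 : ∀ᶠ n in atTop, p (f^[n] x₀) (f^[n] x₀) < r + ε/2 :=
      tlim.eventually_lt_const (by linarith)
    obtain ⟨N, hN⟩ := (h2.and h3).exists_forall_of_atTop
    have hNδ : p (f^[N+1] x₀) (f^[N] x₀) - p (f^[N+1] x₀) (f^[N+1] x₀) ≤ δ :=
      le_of_lt (hN N le_rfl).1
    have single : ∀ m, N ≤ m → p (f^[m] x₀) (f^[N] x₀) ≤ r + ε/2 := by
      intro m hm
      induction m, hm using Nat.le_induction with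
      | base => exact le_of_lt (hN N le_rfl).2
      | succ m hm ih =>
        have hq : r ≤ p (f^[m] x₀) (f^[N] x₀) := hlow m N
        have htri := ptri (f^[m+1] x₀) (f^[N] x₀) (f^[N+1] x₀)
        have hcontr := (hf m N).2
        by_cases hcase : p (f^[m] x₀) (f^[N] x₀) ≤ r + ε/4
        · have h0 : 0 ≤ φ (p (f^[m] x₀) (f^[N] x₀)) := hnn _ hq
          have hδ1 : δ ≤ ε/4 := min_le_left _ _
          linarith
        · push_neg at hcase
          have hmono : φ (r + ε/4) ≤ φ (p (f^[m] x₀) (f^[N] x₀)) :=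
            hmon (by simp; linarith : (r + ε/4) ∈ Set.Ici r) hq (le_of_lt hcase)
          have hδ2 : δ ≤ φ (r + ε/4) := min_le_right _ _
          linarith
    refine ⟨N, fun m hmN n hnN => ?_⟩
    have htri := ptri (f^[m] x₀) (f^[n] x₀) (f^[N] x₀)
    have h4 := single m hmN
    have h5 := single n hnN
    have h6 : p (f^[N] x₀) (f^[n] x₀) = p (f^[n] x₀) (f^[N] x₀) := sym _ _
    have h7 := ht N
    linarith
  -- the double sequence tends to r
  have hdouble : Tendsto (fun mn : ℕ × ℕ => p (f^[mn.1] x₀) (f^[mn.2] x₀))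
      atTop (𝓝 r) := by
    rw [Metric.tendsto_atTop]
    intro ε hε
    obtain ⟨N, hN⟩ := key (ε/2) (by linarith)
    refine ⟨(N, N), fun mn hmn => ?_⟩
    have h1 := hN mn.1 hmn.1 mn.2 hmn.2
    have h2 := hlow mn.1 mn.2
    rw [Real.dist_eq, abs_sub_lt_iff]
    constructor <;> linarith
  have hcauchy : IsCauchySeqP p (fun n : ℕ => f^[n] x₀) := ⟨r, hdouble⟩
  obtain ⟨a, haa, hax⟩ := hcomp x₀ hcauchy
  have hpaa : p a a = r := tendsto_nhds_unique haa hdouble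
  have ha2 : Tendsto (fun n => p a (f^[n] x₀)) atTop (𝓝 r) := hpaa ▸ hax
  have hne : NonExpansive p f := h.elim And.left And.left
  -- p a (f a) ≤ r
  have hfix1 : p a (f a) ≤ r := by
    have hb : ∀ n, p a (f a) ≤ p a (f^[n+1] x₀) + p a (f^[n] x₀)
        - p (f^[n+1] x₀) (f^[n+1] x₀) := by
      intro n
      have h1 := ptri a (f a) (f^[n+1] x₀)
      have h2 : p (f^[n+1] x₀) (f a) ≤ p a (f^[n] x₀) := by
        have hx1 : f^[n+1] x₀ = f (f^[n] x₀) := Function.iterate_succ_apply' f n x₀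
        rw [hx1, sym a (f^[n] x₀)]
        exact hne (f^[n] x₀) a
      linarith
    have hlim : Tendsto (fun n => p a (f^[n+1] x₀) + p a (f^[n] x₀)
        - p (f^[n+1] x₀) (f^[n+1] x₀)) atTop (𝓝 (r + r - r)) :=
      ((ha2.comp (tendsto_add_atTop_nat 1)).add ha2).sub
        (tlim.comp (tendsto_add_atTop_nat 1))
    have := ge_of_tendsto' hlim hb
    linarith
  have hfix2 : p a (f a) = r := le_antisymm hfix1 (hpaa ▸ ssd a (f a))
  have hfix3 : p (f a) (f a) ≤ r := by
    have h1 := ssd (f a) a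
    rw [sym (f a) a] at h1
    linarith
  have hfix4 : r ≤ p (f a) (f a) := by
    rcases h with ⟨_, hoc⟩ | ⟨_, hbound⟩
    · have hx2 : Tendsto (fun n => p (f^[n] x₀) a) atTop (𝓝 (p a a)) := by
        have heq : (fun n => p (f^[n] x₀) a) = fun n => p a (f^[n] x₀) :=
          funext fun n => sym _ _
        rw [heq]; exact hax
      have hcont := hoc a hx2
      refine ge_of_tendsto hcont (Filter.Eventually.of_forall fun n => ?_)
      exact le_trans (ht n) (ssd _ _)
    · exact hbound _ _
  have hfaa : p (f a) (f a) = r := le_antisymm hfix3 hfix4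
  have hafa : a = f a := (sep a (f a)).2 ⟨by rw [hpaa, hfix2], by rw [hfix2, hfaa]⟩
  exact ⟨a, hafa.symm, hpaa⟩
end

section
/- Let (X, p) be a strong partial metric space, r ∈ ℝ, x₀ ∈ X, φ : [r, ∞) → [0, ∞) a continuous non-decreasing function with φ(r) = 0 and φ(t) > 0 for all t > r, and f : X → X a map such that f is orbitally φ_r-contractive at x₀ (witnessed by φ) and (X, p) is orbitally complete for f. Assume further that either (1) f is non-expansive, or (2) f is orbitally continuous at x₀. Then there exists a ∈ X such that f a = a and p(a, a) = r. -/
open Filter Topology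

theorem stmt_17 {X : Type*} [Nonempty X] (p : X → X → ℝ) (hp : IsStrongPartialMetric p)
    (r : ℝ) (x₀ : X) (φ : ℝ → ℝ) (hφ : PhiAdmissible r φ)
    (f : X → X) (hf : PhiRContractiveAtWith p f x₀ r φ)
    (hcomp : OrbitallyComplete p f)
    (h : NonExpansive p f ∨ ∀ z : X, OrbContAtFor p f x₀ z) :
    ∃ a : X, f a = a ∧ p a a = r := by

  obtain ⟨hlt, hsym, htri⟩ := hp
  obtain ⟨hφcont, hφmono, hφnn, hφr, hφpos⟩ := hφ
  set x : ℕ → X := fun n => f^[n] x₀ with hx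
  have hle : ∀ u v : X, p u u ≤ p u v := by
    intro u v
    rcases eq_or_ne u v with h' | h'
    · rw [h']
    · exact (hlt u v h').le
  have hr : ∀ n, r ≤ p (x n) (x n) := fun n => (hf n n).1
  have hc : ∀ m n, p (x (m+1)) (x (n+1)) ≤ p (x m) (x n) - φ (p (x m) (x n)) :=
    fun m n => (hf m n).2
  have hrlow : ∀ m n, r ≤ p (x m) (x n) := by
    intro m n
    calc r ≤ p (x n) (x n) := hr n
      _ ≤ p (x n) (x m) := hle _ _
      _ = p (x m) (x n) := hsym _ _
  have hφnn' : ∀ m n, (0:ℝ) ≤ φ (p (x m) (x n)) := fun m n => hφnn _ (hrlow m n)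
  set c : ℕ → ℝ := fun n => p (x n) (x (n+1)) with hcdef
  have hcstep : ∀ n, c (n+1) ≤ c n - φ (c n) := fun n => hc n (n+1)
  have hcmono : ∀ n, c (n+1) ≤ c n := fun n => by
    have := hcstep n; have := hφnn' n (n+1); simp only [hcdef] at *; linarith
  have hcanti : Antitone c := antitone_nat_of_succ_le hcmono
  have hcr : ∀ n, r ≤ c n := fun n => hrlow n (n+1)
  -- Lemma A : eventually c n ≤ r + ε
  have lemA : ∀ ε : ℝ, 0 < ε → ∃ N, ∀ n ≥ N, c n ≤ r + ε := by
    intro ε hε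
    by_contra hcon
    push_neg at hcon
    have hall : ∀ n, r + ε < c n := by
      intro n
      obtain ⟨m, hm, hm2⟩ := hcon n
      exact lt_of_lt_of_le hm2 (hcanti hm)
    have hη : (0:ℝ) < φ (r + ε) := hφpos _ (by linarith)
    have hstep : ∀ n, c (n+1) ≤ c n - φ (r + ε) := by
      intro n
      have h1 : φ (r + ε) ≤ φ (c n) :=
        hφmono (by simp [Set.mem_Ici]; linarith) (Set.mem_Ici.mpr (hcr n)) (hall n).le
      have := hcstep n
      linarith
    have hlin : ∀ n : ℕ, c n ≤ c 0 - n * φ (r + ε) := by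
      intro n
      induction n with
      | zero => simp
      | succ k ih =>
        have := hstep k
        push_cast
        push_cast at ih
        linarith
    obtain ⟨n, hn⟩ := exists_nat_gt ((c 0 - r) / φ (r + ε))
    have hn2 : c 0 - r < n * φ (r + ε) := by
      rw [div_lt_iff₀ hη] at hn
      linarith
    have := hlin n
    have := hcr n
    linarith
  -- Lemma B : p (x m) (x n) ≤ r + ε for large m n
  have lemB : ∀ ε : ℝ, 0 < ε → ∃ N, ∀ m ≥ N, ∀ n ≥ N, p (x m) (x n) ≤ r + ε := by
    intro ε hε
    set δ := min (ε/2) (φ (r + ε/2)) with hδdef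
    have hδpos : 0 < δ := lt_min (by linarith) (hφpos _ (by linarith))
    have hδle : δ ≤ ε/2 := min_le_left _ _
    have hδle2 : δ ≤ φ (r + ε/2) := min_le_right _ _
    obtain ⟨N, hN⟩ := lemA δ hδpos
    have key : ∀ n ≥ N, ∀ k, p (x n) (x (n+k)) ≤ r + ε := by
      intro n hn k
      induction k with
      | zero =>
        have h1 : p (x n) (x (n+0)) = p (x n) (x n) := by norm_num
        rw [h1]
        have h2 : p (x n) (x n) ≤ c n := hle _ _
        have := hN n hn
        linarith
      | succ k ih =>
        show p (x n) (x (n+k+1)) ≤ r + ε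
        have htr : r ≤ p (x n) (x (n+k)) := hrlow _ _
        have h1 : p (x n) (x (n+k+1)) ≤
            p (x n) (x (n+1)) + p (x (n+1)) (x (n+k+1)) - p (x (n+1)) (x (n+1)) :=
          htri _ _ _
        have h2 : p (x (n+1)) (x (n+k+1)) ≤
            p (x n) (x (n+k)) - φ (p (x n) (x (n+k))) := hc n (n+k)
        have h3 : p (x n) (x (n+k+1)) ≤ δ + p (x n) (x (n+k)) - φ (p (x n) (x (n+k))) := by
          have h4 := hN n hn
          have h5 := hr (n+1)
          simp only [hcdef] at h4
          linarith
        by_cases hcase : p (x n) (x (n+k)) ≤ r + ε - δ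
        · have h6 : (0:ℝ) ≤ φ (p (x n) (x (n+k))) := hφnn _ htr
          linarith
        · push_neg at hcase
          have ht2 : r + ε/2 ≤ p (x n) (x (n+k)) := by linarith
          have h7 : φ (r + ε/2) ≤ φ (p (x n) (x (n+k))) :=
            hφmono (by simp [Set.mem_Ici]; linarith) (Set.mem_Ici.mpr htr) ht2
          linarith
    refine ⟨N, fun m hm n hn => ?_⟩
    rcases le_total m n with h' | h'
    · obtain ⟨k, rfl⟩ := Nat.exists_eq_add_of_le h'
      exact key m hm k
    · obtain ⟨k, rfl⟩ := Nat.exists_eq_add_of_le h'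
      rw [hsym]
      exact key n hn k
  -- double limit is r
  have hdl : Tendsto (fun mn : ℕ × ℕ => p (x mn.1) (x mn.2)) atTop (𝓝 r) := by
    rw [Metric.tendsto_atTop]
    intro ε hε
    obtain ⟨N, hN⟩ := lemB (ε/2) (by linarith)
    refine ⟨(N, N), fun mn hmn => ?_⟩
    have h1 : N ≤ mn.1 := hmn.1
    have h2 : N ≤ mn.2 := hmn.2
    have h3 := hN mn.1 h1 mn.2 h2
    have h4 := hrlow mn.1 mn.2
    rw [Real.dist_eq, abs_lt]
    constructor <;> linarith
  have hcauchy : IsCauchySeqP p x := ⟨r, hdl⟩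
  obtain ⟨a, hsp1, hsp2⟩ := hcomp x₀ hcauchy
  have hpa : p a a = r := tendsto_nhds_unique hsp1 hdl
  rw [hpa] at hsp2
  -- p (x n) (x n) → r
  have hdiag : Tendsto (fun n : ℕ => ((n : ℕ), (n : ℕ))) atTop (atTop : Filter (ℕ × ℕ)) := by
    rw [← prod_atTop_atTop_eq]
    exact tendsto_id.prodMk tendsto_id
  have hself : Tendsto (fun n : ℕ => p (x n) (x n)) atTop (𝓝 r) := hdl.comp hdiag
  -- fixed point
  have hfa : f a = a := by
    rcases h with hne | horb
    · -- non-expansive case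
      have hbound : ∀ n, p a (f a) ≤ p a (x (n+1)) + p a (x n) - r := by
        intro n
        have h1 := htri a (f a) (x (n+1))
        have h2 : p (x (n+1)) (f a) ≤ p a (x n) := by
          have hxe : x (n+1) = f (x n) := Function.iterate_succ_apply' f n x₀
          rw [hxe]
          calc p (f (x n)) (f a) ≤ p (x n) a := hne _ _
            _ = p a (x n) := hsym _ _
        have h3 := hr (n+1)
        have h4 := hsym (f a) (x (n+1))
        linarith
      have t1 : Tendsto (fun n => p a (x (n+1))) atTop (𝓝 r) :=
        hsp2.comp (tendsto_add_atTop_nat 1)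
      have htend : Tendsto (fun n => p a (x (n+1)) + p a (x n) - r) atTop (𝓝 (r + r - r)) :=
        (t1.add hsp2).sub_const r
      have hfin : p a (f a) ≤ r + r - r := ge_of_tendsto' htend hbound
      by_contra h'
      have h8 : a ≠ f a := fun e => h' e.symm
      have := hlt a (f a) h8
      rw [hpa] at this
      linarith
    · -- orbital continuity case
      have hin : Tendsto (fun n => p (x n) a) atTop (𝓝 (p a a)) := by
        have he : (fun n => p (x n) a) = fun n => p a (x n) := funext fun n => hsym _ _
        rw [he, hpa]
        exact hsp2
      have hout : Tendsto (fun n => p (x n) (f a)) atTop (𝓝 (p (f a) (f a))) := horb a hin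
      have hbound : ∀ n, p a (f a) ≤ p a (x n) + p (x n) (f a) - p (x n) (x n) := fun n =>
        htri a (f a) (x n)
      have htend : Tendsto (fun n => p a (x n) + p (x n) (f a) - p (x n) (x n)) atTop
          (𝓝 (r + p (f a) (f a) - r)) := (hsp2.add hout).sub hself
      have hfin : p a (f a) ≤ r + p (f a) (f a) - r := ge_of_tendsto' htend hbound
      by_contra h'
      have h8 : f a ≠ a := h'
      have h9 := hlt (f a) a h8
      have h10 := hsym (f a) a
      linarith
  exact ⟨a, hfa, hpa⟩
end

section
/- Let (X, p) be a strong partial metric space with p(x,y) ≥ 0 for all x, y ∈ X, and let f : X → X be an orbitally continuous map such that (X, p) is orbitally complete for f. If there is some 0 < c < 1 such that min{p(fx, fy), p(x, fx), p(y, fy)} ≤ c·p(x, y) for all x, y ∈ X, then for every x ∈ X the sequence ⟨fⁿx⟩_{n∈ℕ} converges to a fixed point of f with self-distance 0; that is, there exists a ∈ X with f a = a, p(a,a) = 0, and a is a special limit of ⟨fⁿx⟩. -/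
open Filter Topology

theorem stmt_18 {X : Type*} [Nonempty X] (p : X → X → ℝ) (hp : IsStrongPartialMetric p)
    (hpos : ∀ x y : X, 0 ≤ p x y) (f : X → X)
    (horb : ∀ x₀ z : X, OrbContAtFor p f x₀ z)
    (hcomp : OrbitallyComplete p f)
    (c : ℝ) (hc0 : 0 < c) (hc1 : c < 1)
    (hmin : ∀ x y : X, min (p (f x) (f y)) (min (p x (f x)) (p y (f y))) ≤ c * p x y) :
    ∀ x : X, ∃ a : X, f a = a ∧ p a a = 0 ∧ IsSpecialLimit p (fun n : ℕ => f^[n] x) a := by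
  obtain ⟨hsssd, hsym, htri⟩ := hp
  intro x
  set q : ℕ → X := fun n => f^[n] x with hq
  have hq1 : ∀ n, q (n+1) = f (q n) := fun n => Function.iterate_succ_apply' f n x
  set d : ℕ → ℝ := fun n => p (q n) (q (n+1)) with hd
  have hA : ∀ n, p (q n) (q n) ≤ d n := by
    intro n
    by_cases h : q n = q (n+1)
    · show p (q n) (q n) ≤ p (q n) (q (n+1))
      rw [← h]
    · exact (hsssd _ _ h).le
  have hB : ∀ n, d (n+1) ≤ c * d n := by
    intro n
    have h := hmin (q n) (q (n+1))
    rw [← hq1 n, ← hq1 (n+1)] at h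
    rcases min_le_iff.1 h with h1 | h2
    · exact h1
    rcases min_le_iff.1 h2 with h2a | h2b
    · have hdn0 : d n = 0 := le_antisymm (by nlinarith [hpos (q n) (q (n+1))]) (hpos _ _)
      have heq : q n = q (n+1) := by
        by_contra hne
        have h3 := hsssd _ _ hne
        have h4 := hpos (q n) (q n)
        rw [show p (q n) (q (n+1)) = d n from rfl, hdn0] at h3
        linarith
      have heq2 : q (n+2) = q (n+1) := by
        conv_lhs => rw [hq1 (n+1), ← heq, ← hq1 n]
      have hdd : d (n+1) = d n := by
        show p (q (n+1)) (q (n+2)) = p (q n) (q (n+1))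
        rw [heq2, ← heq]
      rw [hdd, hdn0]; simp
    · exact h2b
  have hC : ∀ n, d n ≤ c ^ n * d 0 := by
    intro n
    induction n with
    | zero => simp
    | succ n ih =>
      calc d (n+1) ≤ c * d n := hB n
        _ ≤ c * (c ^ n * d 0) := mul_le_mul_of_nonneg_left ih hc0.le
        _ = c ^ (n+1) * d 0 := by ring
  have hd0 : 0 ≤ d 0 := hpos _ _
  have h1c : 0 < 1 - c := by linarith
  set S : ℝ := d 0 / (1 - c) with hS
  have hSid : d 0 + c * S = S := by
    rw [hS]; field_simp; ring
  have hd0S : d 0 ≤ S := by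
    rw [hS, le_div_iff₀ h1c]; nlinarith
  have hD : ∀ k m, p (q m) (q (m+k)) ≤ c ^ m * S := by
    intro k
    induction k with
    | zero =>
      intro m
      calc p (q m) (q (m+0)) = p (q m) (q m) := rfl
        _ ≤ d m := hA m
        _ ≤ c ^ m * d 0 := hC m
        _ ≤ c ^ m * S := mul_le_mul_of_nonneg_left hd0S (pow_nonneg hc0.le m)
    | succ k ih =>
      intro m
      have e : m + (k+1) = (m+1) + k := by omega
      calc p (q m) (q (m+(k+1)))
          ≤ p (q m) (q (m+1)) + p (q (m+1)) (q (m+(k+1))) - p (q (m+1)) (q (m+1)) :=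
            htri _ _ _
        _ ≤ d m + p (q (m+1)) (q ((m+1)+k)) := by
            rw [e]; have := hpos (q (m+1)) (q (m+1)); linarith [le_refl (d m)]
        _ ≤ c ^ m * d 0 + c ^ (m+1) * S := add_le_add (hC m) (ih (m+1))
        _ = c ^ m * S := by linear_combination (c ^ m) * hSid
  have hD' : ∀ m n, m ≤ n → p (q m) (q n) ≤ c ^ m * S := by
    intro m n h
    obtain ⟨k, rfl⟩ := Nat.exists_eq_add_of_le h
    exact hD k m
  have hD'' : ∀ m n : ℕ, p (q m) (q n) ≤ c ^ (min m n) * S := by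
    intro m n
    rcases le_total m n with h | h
    · rw [min_eq_left h]; exact hD' m n h
    · rw [min_eq_right h, hsym]; exact hD' n m h
  have htmin : Tendsto (fun mn : ℕ × ℕ => min mn.1 mn.2) atTop atTop := by
    rw [tendsto_atTop]
    intro b
    filter_upwards [eventually_ge_atTop (b, b)] with mn h
    exact le_min h.1 h.2
  have hc_lim : Tendsto (fun n : ℕ => c ^ n) atTop (𝓝 0) :=
    tendsto_pow_atTop_nhds_zero_of_lt_one hc0.le hc1
  have hlim0 : Tendsto (fun mn : ℕ × ℕ => c ^ (min mn.1 mn.2) * S) atTop (𝓝 0) := by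
    have := (hc_lim.comp htmin).mul_const S
    simpa using this
  have hCauchy0 : Tendsto (fun mn : ℕ × ℕ => p (q mn.1) (q mn.2)) atTop (𝓝 0) :=
    squeeze_zero (fun mn => hpos _ _) (fun mn => hD'' _ _) hlim0
  obtain ⟨a, haspec⟩ := hcomp x ⟨0, hCauchy0⟩
  have hpaa : p a a = 0 := tendsto_nhds_unique haspec.1 hCauchy0
  have h2 : Tendsto (fun n => p a (q n)) atTop (𝓝 0) := hpaa ▸ haspec.2
  have harg : Tendsto (fun n => p (q n) a) atTop (𝓝 (p a a)) := by
    have he : (fun n => p (q n) a) = fun n => p a (q n) := funext fun n => hsym _ _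
    rw [he, hpaa]; exact h2
  have hfc : Tendsto (fun n => p (q n) (f a)) atTop (𝓝 (p (f a) (f a))) := horb x a harg
  have hself : Tendsto (fun n => p (q n) (q n)) atTop (𝓝 0) := by
    refine squeeze_zero (fun n => hpos _ _) (fun n => (hA n).trans (hC n)) ?_
    have := hc_lim.mul_const (d 0)
    simpa using this
  have hshift : Tendsto (fun n : ℕ => n + 1) atTop atTop := tendsto_add_atTop_nat 1
  have hfix : f a = a := by
    by_contra hne
    have hlt : p (f a) (f a) < p a (f a) := by
      have := hsssd (f a) a hne
      rwa [hsym (f a) a] at this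
    have hineq : ∀ n : ℕ, p a (f a) ≤ p a (q (n+1)) + p (q (n+1)) (f a) - p (q (n+1)) (q (n+1)) :=
      fun n => htri _ _ _
    have t1 : Tendsto (fun n => p a (q (n+1))) atTop (𝓝 0) := h2.comp hshift
    have t2 : Tendsto (fun n => p (q (n+1)) (f a)) atTop (𝓝 (p (f a) (f a))) := hfc.comp hshift
    have t3 : Tendsto (fun n => p (q (n+1)) (q (n+1))) atTop (𝓝 0) := hself.comp hshift
    have hle := le_of_tendsto_of_tendsto' tendsto_const_nhds ((t1.add t2).sub t3) hineq
    simp only [zero_add, sub_zero] at hle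
    linarith
  exact ⟨a, hfix, hpaa, haspec⟩
end
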